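/- arXiv:2402.03418 — 7 statements merged into one kernel-verified Lean document; each statement's English description precedes it below -/
import Mathlib

section
/- Let a₀ ≠ 0, a₁, d₀ ≠ 0, k₁ ≠ 0, k₃ be real constants with d₀ ≠ 3k₁/2 and d₀ ≠ 2k₁, and let τ(t) = 3k₁ t + k₃ on an interval where τ > 0. Define A(t) = a₀·τ^{−d₀/(3k₁)} + a₁·τ^{−1/3} and β'(t) = −(1/2)(τ(t)·A(t)·A'(t) + k₁·A(t)²). Then Q(t) := A'(t)/A(t) − β''(t)/β'(t) equals d₀/τ(t) for all t in the interval (wherever A(t) ≠ 0 and β'(t) ≠ 0). -/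
/-!
Writing `p = d₀ / (3 k₁)`, Euler's identity for the two powers of `τ` (with `τ' = 3 k₁`) gives
`τ A' + k₁ A = (k₁ - d₀) a₀ τ^(-p)`, so `β' = ((d₀ - k₁) a₀ / 2) · τ^(-p) · A`.
Taking logarithmic derivatives, `β''/β' = -d₀/τ + A'/A`, hence `Q = A'/A - β''/β' = d₀/τ`.
-/

open Real Filter Topology

theorem logDeriv_rpow_const {f : ℝ → ℝ} {x : ℝ} (c : ℝ) (hf : DifferentiableAt ℝ f x)
    (hx : 0 < f x) : logDeriv (fun y => f y ^ c) x = c * logDeriv f x := by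
  rw [logDeriv_apply, logDeriv_apply, (hf.hasDerivAt.rpow_const (Or.inl hx.ne')).deriv,
    rpow_sub_one hx.ne']
  field_simp

theorem HasDerivAt.add_const_mul_rpow {f : ℝ → ℝ} {m x : ℝ} (a b α γ : ℝ) (hf : HasDerivAt f m x)
    (hx : 0 < f x) :
    HasDerivAt (fun y => a * f y ^ α + b * f y ^ γ)
      (m * (α * a * f x ^ α + γ * b * f x ^ γ) / f x) x := by
  refine (((hf.rpow_const (p := α) (Or.inl hx.ne')).const_mul a).add
    ((hf.rpow_const (p := γ) (Or.inl hx.ne')).const_mul b)).congr_deriv ?_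
  rw [rpow_sub_one hx.ne', rpow_sub_one hx.ne']
  ring

theorem mul_deriv_add_mul_eq_of_rpow {a₀ a₁ d₀ k₁ t : ℝ} {τ A : ℝ → ℝ} (hk₁ : k₁ ≠ 0)
    (hτ : HasDerivAt τ (3 * k₁) t) (ht : 0 < τ t)
    (hA : A = fun s => a₀ * τ s ^ (-(d₀ / (3 * k₁))) + a₁ * τ s ^ (-(1/3 : ℝ))) :
    τ t * deriv A t + k₁ * A t = (k₁ - d₀) * a₀ * τ t ^ (-(d₀ / (3 * k₁))) := by
  subst hA
  rw [(hτ.add_const_mul_rpow a₀ a₁ _ _ ht).deriv]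
  field_simp
  ring

theorem stmt3_general (a₀ a₁ d₀ k₁ k₃ : ℝ) (hk₁ : k₁ ≠ 0)
    (τ A βp Q : ℝ → ℝ)
    (hτ : ∀ t, τ t = 3 * k₁ * t + k₃)
    (hA : ∀ t, A t = a₀ * τ t ^ (-(d₀ / (3 * k₁))) + a₁ * τ t ^ (-(1/3 : ℝ)))
    (hβp : ∀ t, βp t = -(1/2) * (τ t * A t * deriv A t + k₁ * (A t)^2))
    (hQ : ∀ t, Q t = deriv A t / A t - deriv βp t / βp t) :
    ∀ t, τ t > 0 → A t ≠ 0 → βp t ≠ 0 → Q t = d₀ / τ t := by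
  intro t ht hAt hβt
  set p := d₀ / (3 * k₁)
  have hτd (s : ℝ) : HasDerivAt τ (3 * k₁) s := by
    simpa [funext hτ] using ((hasDerivAt_id s).const_mul (3 * k₁)).add_const k₃
  have hAd : DifferentiableAt ℝ A t :=
    (funext hA ▸ (hτd t).add_const_mul_rpow a₀ a₁ _ _ ht).differentiableAt
  set c := (d₀ - k₁) / 2 * a₀
  have hβ : βp =ᶠ[𝓝 t] fun s => c * (τ s ^ (-p) * A s) := by
    have hpos : ∀ᶠ s in 𝓝 t, 0 < τ s := (hτd t).continuousAt.eventually (lt_mem_nhds ht)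
    filter_upwards [hpos] with s hs
    have key := mul_deriv_add_mul_eq_of_rpow hk₁ (hτd s) hs (funext hA)
    rw [hβp s]
    linear_combination (-(1/2) * A s) * key
  have hc : c ≠ 0 := by
    intro hc
    exact hβt (by simpa [hc] using hβ.eq_of_nhds)
  calc Q t = logDeriv A t - logDeriv βp t := hQ t
    _ = logDeriv A t - (logDeriv (fun s => τ s ^ (-p)) t + logDeriv A t) := by
      rw [(logDeriv_congr_nhds hβ).eq_of_nhds, logDeriv_const_mul _ _ hc,
        logDeriv_mul (f := fun s => τ s ^ (-p)) t (rpow_pos_of_pos ht _).ne' hAt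
          ((hτd t).differentiableAt.rpow_const (Or.inl ht.ne')) hAd]
    _ = d₀ / τ t := by
      rw [logDeriv_rpow_const _ (hτd t).differentiableAt ht, logDeriv_apply τ, (hτd t).deriv]
      simp only [p]
      field_simp
      ring

theorem stmt3 (a₀ a₁ d₀ k₁ k₃ : ℝ) (ha₀ : a₀ ≠ 0) (hd₀ : d₀ ≠ 0) (hk₁ : k₁ ≠ 0)
    (h1 : d₀ ≠ 3 * k₁ / 2) (h2 : d₀ ≠ 2 * k₁)
    (τ A βp Q : ℝ → ℝ)
    (hτ : ∀ t, τ t = 3 * k₁ * t + k₃)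
    (hA : ∀ t, A t = a₀ * τ t ^ (-(d₀ / (3 * k₁))) + a₁ * τ t ^ (-(1/3 : ℝ)))
    (hβp : ∀ t, βp t = -(1/2) * (τ t * A t * deriv A t + k₁ * (A t)^2))
    (hQ : ∀ t, Q t = deriv A t / A t - deriv βp t / βp t) :
    ∀ t, τ t > 0 → A t ≠ 0 → βp t ≠ 0 → Q t = d₀ / τ t :=
  stmt3_general a₀ a₁ d₀ k₁ k₃ hk₁ τ A βp Q hτ hA hβp hQ
end

section
/- Let A, B, C, Q : ℝ → ℝ be smooth with A, B, C nowhere zero, and let c₁, c₂ be real constants. Define φ(x,t,u) = c₁·e^{2∫Q dt}·u + c₂·e^{∫Q dt} (where ∫Q dt denotes any fixed antiderivative R of Q). Then for every smooth u(x,t), substituting v = φ(x,t,u(x,t)) into the adjoint expression F* = v·Q − C·u²·v_x − B·v_{xxx} − A·u·v_x − v_t yields F*|_{v=φ} = λ·F where F = u_t + A u u_x + C u² u_x + B u_{xxx} + Q u and λ = −c₁·e^{2R(t)}. In particular the equation is nonlinearly self-adjoint with substitution φ. -/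
open Real

/-- Total (spatial) derivative operator `D_x`. -/
noncomputable def dX (f : ℝ → ℝ → ℝ) : ℝ → ℝ → ℝ := fun x t => deriv (fun y => f y t) x

/-- Total (temporal) derivative operator `D_t`. -/
noncomputable def dT (f : ℝ → ℝ → ℝ) : ℝ → ℝ → ℝ := fun x t => deriv (fun s => f x s) t

theorem stmt5 (A B C Q R : ℝ → ℝ) (c₁ c₂ : ℝ)
    (hA : ContDiff ℝ (⊤ : ℕ∞) A) (hB : ContDiff ℝ (⊤ : ℕ∞) B) (hC : ContDiff ℝ (⊤ : ℕ∞) C)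
    (hQ : ContDiff ℝ (⊤ : ℕ∞) Q)
    (hAne : ∀ t, A t ≠ 0) (hBne : ∀ t, B t ≠ 0) (hCne : ∀ t, C t ≠ 0)
    (hR : ∀ t, HasDerivAt R (Q t) t)
    (u : ℝ → ℝ → ℝ) (hu : ContDiff ℝ (⊤ : ℕ∞) fun p : ℝ × ℝ => u p.1 p.2)
    (v : ℝ → ℝ → ℝ)
    (hv : ∀ y s, v y s = c₁ * exp (2 * R s) * u y s + c₂ * exp (R s)) :
    ∀ x t,
      v x t * Q t - C t * (u x t)^2 * dX v x t - B t * dX (dX (dX v)) x t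
        - A t * u x t * dX v x t - dT v x t
      = (-c₁ * exp (2 * R t)) *
          (dT u x t + A t * u x t * dX u x t + C t * (u x t)^2 * dX u x t
            + B t * dX (dX (dX u)) x t + Q t * u x t) := by
  have hux : ∀ t, ContDiff ℝ (⊤ : ℕ∞) (fun y => u y t) :=
    fun t => hu.comp (contDiff_id.prodMk contDiff_const)
  have hut : ∀ x, ContDiff ℝ (⊤ : ℕ∞) (fun s => u x s) :=
    fun x => hu.comp (contDiff_const.prodMk contDiff_id)
  have hux1 : ∀ t, ContDiff ℝ (⊤ : ℕ∞) (fun y => dX u y t) := by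
    intro t
    exact (contDiff_infty_iff_deriv.mp ((hux t).of_le (by simp))).2
  have hux2 : ∀ t, ContDiff ℝ (⊤ : ℕ∞) (fun y => dX (dX u) y t) := by
    intro t
    exact (contDiff_infty_iff_deriv.mp (hux1 t)).2
  have h1 : ∀ y t, dX v y t = c₁ * exp (2 * R t) * dX u y t := by
    intro y t
    have : (fun y => v y t) = fun y => (c₁ * exp (2 * R t)) * u y t + c₂ * exp (R t) :=
      funext fun y => hv y t
    simp only [dX, this, deriv_add_const,
      deriv_const_mul _ ((hux t).differentiable (by simp) y)]
  have h2 : ∀ y t, dX (dX v) y t = c₁ * exp (2 * R t) * dX (dX u) y t := by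
    intro y t
    have : (fun y => dX v y t) = fun y => (c₁ * exp (2 * R t)) * dX u y t :=
      funext fun y => h1 y t
    show deriv (fun y => dX v y t) y = _
    rw [this, deriv_const_mul _ ((hux1 t).differentiable (by simp) y)]
    rfl
  have h3 : ∀ y t, dX (dX (dX v)) y t = c₁ * exp (2 * R t) * dX (dX (dX u)) y t := by
    intro y t
    have : (fun y => dX (dX v) y t) = fun y => (c₁ * exp (2 * R t)) * dX (dX u) y t :=
      funext fun y => h2 y t
    show deriv (fun y => dX (dX v) y t) y = _
    rw [this, deriv_const_mul _ ((hux2 t).differentiable (by simp) y)]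
    rfl
  intro x t
  have he2 : HasDerivAt (fun s => exp (2 * R s)) (exp (2 * R t) * (2 * Q t)) t :=
    ((hR t).const_mul 2).exp
  have he1 : HasDerivAt (fun s => exp (R s)) (exp (R t) * Q t) t := (hR t).exp
  have huT : HasDerivAt (fun s => u x s) (dT u x t) t :=
    ((hut x).differentiable (by simp) t).hasDerivAt
  have hT : dT v x t
      = c₁ * (exp (2 * R t) * (2 * Q t) * u x t + exp (2 * R t) * dT u x t)
        + c₂ * (exp (R t) * Q t) := by
    have hfun : (fun s => v x s) = fun s => c₁ * (exp (2 * R s) * u x s) + c₂ * exp (R s) := by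
      funext s; rw [hv x s]; ring
    have hd : HasDerivAt (fun s => c₁ * (exp (2 * R s) * u x s) + c₂ * exp (R s))
        (c₁ * (exp (2 * R t) * (2 * Q t) * u x t + exp (2 * R t) * dT u x t)
          + c₂ * (exp (R t) * Q t)) t :=
      ((he2.mul huT).const_mul c₁).add (he1.const_mul c₂)
    simp only [dT, hfun]
    exact hd.deriv
  rw [hv x t, h1, h3, hT]
  ring
end

section
/- Let b₀ ≠ 0, d₀ ≠ 0, k₁ ≠ 0, k₃ be real constants, τ(t) = 3k₁ t + k₃ > 0 on an interval, A(t) = a₀ τ^{−d₀/(3k₁)} + a₁ τ^{−1/3}, and Q(t) = d₀/τ(t). Let u(x,t) be a smooth solution of u_t + A(t)·u·u_x + u²·u_x + b₀·u_{xxx} + Q(t)·u = 0. Define T^t = τ^{d₀/(3k₁)}·u·(c₁ + (c₂/2)·τ^{d₀/(3k₁)}·u) and T^x = (1/12)·τ^{d₀/(3k₁)}·[ τ^{d₀/(3k₁)}·(6 b₀ c₂ (2 u u_{xx} − u_x²) + 3 c₂ u⁴) + 6 a₀ c₁ u² τ^{−d₀/(3k₁)} + 6 a₁ c₁ u² τ^{−1/3}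 + 4 a₁ c₂ u³ τ^{d₀/(3k₁)−1/3} + 4 c₁ (u³ + 3 b₀ u_{xx}) + 4 a₀ c₂ u³ ]. Then D_t T^t + D_x T^x = 0 on the interval, for all real constants c₁, c₂. -/
open Real

theorem stmt6 (a₀ a₁ b₀ d₀ k₁ k₃ : ℝ) (hb₀ : b₀ ≠ 0) (hd₀ : d₀ ≠ 0) (hk₁ : k₁ ≠ 0)
    (τ A Q : ℝ → ℝ)
    (hτ : ∀ t, τ t = 3 * k₁ * t + k₃)
    (hA : ∀ t, A t = a₀ * τ t ^ (-(d₀ / (3 * k₁))) + a₁ * τ t ^ (-(1/3 : ℝ)))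
    (hQ : ∀ t, Q t = d₀ / τ t)
    (u : ℝ → ℝ → ℝ) (hu : ContDiff ℝ (⊤ : ℕ∞) fun p : ℝ × ℝ => u p.1 p.2)
    (hsol : ∀ x t, τ t > 0 →
      dT u x t + A t * u x t * dX u x t + (u x t)^2 * dX u x t
        + b₀ * dX (dX (dX u)) x t + Q t * u x t = 0) :
    ∀ (c₁ c₂ : ℝ) (Tt Tx : ℝ → ℝ → ℝ),
      (∀ x t, Tt x t = τ t ^ (d₀ / (3 * k₁)) * u x t *
          (c₁ + c₂ / 2 * τ t ^ (d₀ / (3 * k₁)) * u x t)) →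
      (∀ x t, Tx x t = (1/12) * τ t ^ (d₀ / (3 * k₁)) *
          ( τ t ^ (d₀ / (3 * k₁)) *
              (6 * b₀ * c₂ * (2 * u x t * dX (dX u) x t - (dX u x t)^2)
                + 3 * c₂ * (u x t)^4)
            + 6 * a₀ * c₁ * (u x t)^2 * τ t ^ (-(d₀ / (3 * k₁)))
            + 6 * a₁ * c₁ * (u x t)^2 * τ t ^ (-(1/3 : ℝ))
            + 4 * a₁ * c₂ * (u x t)^3 * τ t ^ (d₀ / (3 * k₁) - 1/3)
            + 4 * c₁ * ((u x t)^3 + 3 * b₀ * dX (dX u) x t)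
            + 4 * a₀ * c₂ * (u x t)^3 )) →
      ∀ x t, τ t > 0 → dT Tt x t + dX Tx x t = 0 := by
  intro c₁ c₂ Tt Tx hTt hTx x t ht
  have hTne : τ t ≠ 0 := ne_of_gt ht
  set a : ℝ := d₀ / (3 * k₁) with ha
  -- time derivative of τ
  have hτd : HasDerivAt τ (3 * k₁) t := by
    have h1 : HasDerivAt (fun s : ℝ => 3 * k₁ * s + k₃) (3 * k₁) t := by
      simpa using ((hasDerivAt_id t).const_mul (3 * k₁)).add_const k₃
    have h2 : τ = fun s : ℝ => 3 * k₁ * s + k₃ := funext hτ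
    rw [h2]; exact h1
  have hP : HasDerivAt (fun s => τ s ^ a) (3 * k₁ * (a * τ t ^ (a - 1))) t := by
    simpa [mul_assoc, mul_comm, mul_left_comm] using hτd.rpow_const (p := a) (Or.inl hTne)
  have hut : HasDerivAt (fun s => u x s) (dT u x t) t := by
    have h1 : ContDiff ℝ (⊤ : ℕ∞) (fun s : ℝ => u x s) := hu.comp (contDiff_const.prodMk contDiff_id)
    exact (h1.differentiable (by simp) t).hasDerivAt
  set W : ℝ := 3 * k₁ * (a * τ t ^ (a - 1)) * u x t + τ t ^ a * dT u x t with hW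
  have hw : HasDerivAt (fun s => τ s ^ a * u x s) W t := hP.mul hut
  have hTtd : HasDerivAt (fun s => Tt x s)
      (c₁ * W + c₂ / 2 * (W * (τ t ^ a * u x t) + (τ t ^ a * u x t) * W)) t := by
    have h2 : (fun s => Tt x s)
        = fun s => c₁ * (τ s ^ a * u x s) + c₂ / 2 * ((τ s ^ a * u x s) * (τ s ^ a * u x s)) := by
      funext s; rw [hTt]; ring
    rw [h2]
    exact (hw.const_mul c₁).add ((hw.mul hw).const_mul (c₂ / 2))
  -- space side
  have hg : ContDiff ℝ ((⊤ : ℕ∞) : WithTop ℕ∞) (fun y : ℝ => u y t) :=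
    (hu.comp (contDiff_id.prodMk contDiff_const)).of_le (by simp)
  have hg1 : ContDiff ℝ ((⊤ : ℕ∞) : WithTop ℕ∞) (deriv fun y : ℝ => u y t) :=
    (contDiff_infty_iff_deriv.mp hg).2
  have hg2 : ContDiff ℝ ((⊤ : ℕ∞) : WithTop ℕ∞) (deriv (deriv fun y : ℝ => u y t)) :=
    (contDiff_infty_iff_deriv.mp hg1).2
  have hone : (1 : WithTop ℕ∞) ≤ ((⊤ : ℕ∞) : WithTop ℕ∞) := by exact_mod_cast le_top
  have hux : HasDerivAt (fun y : ℝ => u y t) (dX u x t) x :=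
    (hg.differentiable (by simp) x).hasDerivAt
  have huxx : HasDerivAt (deriv fun y : ℝ => u y t) (dX (dX u) x t) x :=
    (hg1.differentiable (by simp) x).hasDerivAt
  have huxxx : HasDerivAt (deriv (deriv fun y : ℝ => u y t)) (dX (dX (dX u)) x t) x :=
    (hg2.differentiable (by simp) x).hasDerivAt
  have h2 : (fun y => Tx y t) = fun y =>
      1/12 * τ t ^ a *
        (τ t ^ a *
            (6 * b₀ * c₂ * (2 * u y t * deriv (deriv fun z : ℝ => u z t) y
                - (deriv (fun z : ℝ => u z t) y)^2)
              + 3 * c₂ * (u y t)^4)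
          + 6 * a₀ * c₁ * (u y t)^2 * τ t ^ (-a)
          + 6 * a₁ * c₁ * (u y t)^2 * τ t ^ (-(1/3 : ℝ))
          + 4 * a₁ * c₂ * (u y t)^3 * τ t ^ (a - 1/3)
          + 4 * c₁ * ((u y t)^3 + 3 * b₀ * deriv (deriv fun z : ℝ => u z t) y)
          + 4 * a₀ * c₂ * (u y t)^3) := by
    funext y; rw [hTx]; rfl
  have r1 : deriv (fun z : ℝ => u z t) x = dX u x t := rfl
  have r2 : deriv (deriv fun z : ℝ => u z t) x = dX (dX u) x t := rfl
  have hbig : HasDerivAt (fun y => Tx y t)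
      (1/12 * τ t ^ a *
        (τ t ^ a * (12 * b₀ * c₂ * u x t * dX (dX (dX u)) x t
            + 12 * c₂ * (u x t)^3 * dX u x t)
          + 12 * a₀ * c₁ * u x t * dX u x t * τ t ^ (-a)
          + 12 * a₁ * c₁ * u x t * dX u x t * τ t ^ (-(1/3 : ℝ))
          + 12 * a₁ * c₂ * (u x t)^2 * dX u x t * τ t ^ (a - 1/3)
          + 12 * c₁ * ((u x t)^2 * dX u x t + b₀ * dX (dX (dX u)) x t)
          + 12 * a₀ * c₂ * (u x t)^2 * dX u x t)) x := by
    rw [h2]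
    have h := HasDerivAt.const_mul (1/12 * τ t ^ a)
      (((((((((((hux.const_mul 2).mul huxxx).sub (huxx.pow 2)).const_mul (6 * b₀ * c₂)).add
            ((hux.pow 4).const_mul (3 * c₂))).const_mul (τ t ^ a)).add
          (((hux.pow 2).const_mul (6 * a₀ * c₁)).mul_const (τ t ^ (-a)))).add
          (((hux.pow 2).const_mul (6 * a₁ * c₁)).mul_const (τ t ^ (-(1/3 : ℝ))))).add
          (((hux.pow 3).const_mul (4 * a₁ * c₂)).mul_const (τ t ^ (a - 1/3)))).add
          (((hux.pow 3).add (huxxx.const_mul (3 * b₀))).const_mul (4 * c₁))).add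
          ((hux.pow 3).const_mul (4 * a₀ * c₂)))
    refine h.congr_deriv ?_
    simp only [r1, r2]
    push_cast
    ring
  have hUt : dT u x t = -(A t * u x t * dX u x t + (u x t)^2 * dX u x t
      + b₀ * dX (dX (dX u)) x t + Q t * u x t) := by
    have h := hsol x t ht; linarith
  have had : 3 * k₁ * a = d₀ := by
    rw [ha]; field_simp
  have hP0 : (0:ℝ) < τ t ^ a := Real.rpow_pos_of_pos ht a
  have hR0 : (0:ℝ) < τ t ^ ((1:ℝ)/3) := Real.rpow_pos_of_pos ht _
  show deriv (fun s => Tt x s) t + deriv (fun y => Tx y t) x = 0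
  rw [hTtd.deriv, hbig.deriv, hW, hUt, hA t, hQ t, ← had]
  rw [Real.rpow_neg ht.le a, Real.rpow_neg ht.le (1/3 : ℝ), Real.rpow_sub ht a (1/3),
    Real.rpow_sub ht a 1, Real.rpow_one]
  field_simp
  ring
end

section
/- Let u(x,t) be a smooth solution of the constant-coefficient Gardner equation u_t + u u_x + u² u_x + u_{xxx} = 0. Define T^t = −(k₁/2)(c₁ u² + c₁ u + c₂) and T^x = −c₁ k₁ u u_{xx} − (c₁ k₁/2) u_{xx} + (c₁ k₁/2) u_x² − (c₁ k₁/4) u⁴ − (c₁ k₁/2) u³ − (c₁ k₁/4) u², for arbitrary real constants k₁, c₁, c₂. Then D_t T^t + D_x T^x = 0. -/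
open Real

lemma hasDerivAt_dX (u : ℝ → ℝ → ℝ)
    (hu : ContDiff ℝ (⊤ : ℕ∞) fun p : ℝ × ℝ => u p.1 p.2) (x t : ℝ) :
    HasDerivAt (fun y => u y t) (dX u x t) x := by
  have h1 : HasFDerivAt (fun p : ℝ × ℝ => u p.1 p.2)
      (fderiv ℝ (fun p : ℝ × ℝ => u p.1 p.2) (x, t)) (x, t) :=
    ((hu.differentiable (by simp)) (x, t)).hasFDerivAt
  have h2 : HasDerivAt (fun y : ℝ => ((y, t) : ℝ × ℝ)) ((1 : ℝ), (0 : ℝ)) x :=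
    HasDerivAt.prodMk (hasDerivAt_id x) (hasDerivAt_const x t)
  have h3 := h1.comp_hasDerivAt x h2
  exact h3.differentiableAt.hasDerivAt

lemma hasDerivAt_dT (u : ℝ → ℝ → ℝ)
    (hu : ContDiff ℝ (⊤ : ℕ∞) fun p : ℝ × ℝ => u p.1 p.2) (x t : ℝ) :
    HasDerivAt (fun s => u x s) (dT u x t) t := by
  have h1 : HasFDerivAt (fun p : ℝ × ℝ => u p.1 p.2)
      (fderiv ℝ (fun p : ℝ × ℝ => u p.1 p.2) (x, t)) (x, t) :=
    ((hu.differentiable (by simp)) (x, t)).hasFDerivAt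
  have h2 : HasDerivAt (fun s : ℝ => ((x, s) : ℝ × ℝ)) ((0 : ℝ), (1 : ℝ)) t :=
    HasDerivAt.prodMk (hasDerivAt_const t x) (hasDerivAt_id t)
  have h3 := h1.comp_hasDerivAt t h2
  exact h3.differentiableAt.hasDerivAt

lemma contDiff_dX (u : ℝ → ℝ → ℝ)
    (hu : ContDiff ℝ (⊤ : ℕ∞) fun p : ℝ × ℝ => u p.1 p.2) :
    ContDiff ℝ (⊤ : ℕ∞) (fun p : ℝ × ℝ => dX u p.1 p.2) := by
  have key : (fun p : ℝ × ℝ => dX u p.1 p.2)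
      = fun p : ℝ × ℝ => fderiv ℝ (fun q : ℝ × ℝ => u q.1 q.2) p ((1 : ℝ), (0 : ℝ)) := by
    funext p
    have h1 : HasFDerivAt (fun q : ℝ × ℝ => u q.1 q.2)
        (fderiv ℝ (fun q : ℝ × ℝ => u q.1 q.2) (p.1, p.2)) (p.1, p.2) :=
      ((hu.differentiable (by simp)) (p.1, p.2)).hasFDerivAt
    have h2 : HasDerivAt (fun y : ℝ => ((y, p.2) : ℝ × ℝ)) ((1 : ℝ), (0 : ℝ)) p.1 :=
      HasDerivAt.prodMk (hasDerivAt_id p.1) (hasDerivAt_const p.1 p.2)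
    have h3 := h1.comp_hasDerivAt p.1 h2
    simpa [dX, Function.comp_def] using h3.deriv
  rw [key]
  exact (hu.fderiv_right (by simp)).clm_apply contDiff_const

theorem stmt9 (u : ℝ → ℝ → ℝ)
    (hu : ContDiff ℝ (⊤ : ℕ∞) fun p : ℝ × ℝ => u p.1 p.2)
    (hsol : ∀ x t, dT u x t + u x t * dX u x t + (u x t)^2 * dX u x t
      + dX (dX (dX u)) x t = 0)
    (k₁ c₁ c₂ : ℝ)
    (Tt Tx : ℝ → ℝ → ℝ)
    (hTt : ∀ x t, Tt x t = -(k₁ / 2) * (c₁ * (u x t)^2 + c₁ * u x t + c₂))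
    (hTx : ∀ x t, Tx x t =
      -c₁ * k₁ * u x t * dX (dX u) x t - (c₁ * k₁ / 2) * dX (dX u) x t
        + (c₁ * k₁ / 2) * (dX u x t)^2 - (c₁ * k₁ / 4) * (u x t)^4
        - (c₁ * k₁ / 2) * (u x t)^3 - (c₁ * k₁ / 4) * (u x t)^2) :
    ∀ x t, dT Tt x t + dX Tx x t = 0 := by
  intro x t
  have hu1 : ContDiff ℝ (⊤ : ℕ∞) (fun p : ℝ × ℝ => dX u p.1 p.2) := contDiff_dX u hu
  have hu2 : ContDiff ℝ (⊤ : ℕ∞) (fun p : ℝ × ℝ => dX (dX u) p.1 p.2) := contDiff_dX (dX u) hu1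
  have hA : HasDerivAt (fun y => u y t) (dX u x t) x := hasDerivAt_dX u hu x t
  have hA1 : HasDerivAt (fun y => dX u y t) (dX (dX u) x t) x := hasDerivAt_dX (dX u) hu1 x t
  have hA2 : HasDerivAt (fun y => dX (dX u) y t) (dX (dX (dX u)) x t) x :=
    hasDerivAt_dX (dX (dX u)) hu2 x t
  have hAt : HasDerivAt (fun s => u x s) (dT u x t) t := hasDerivAt_dT u hu x t
  -- temporal derivative of Tt
  have e1 : dT Tt x t = -(k₁/2) * (c₁ * (2 * u x t * dT u x t) + c₁ * dT u x t) := by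
    have hgt : (fun s => Tt x s)
        = fun s => -(k₁/2) * ((c₁ * (u x s)^2 + c₁ * u x s) + c₂) := by
      funext s; rw [hTt]
    have hd := ((((hAt.pow 2).const_mul c₁).add (hAt.const_mul c₁)).add_const c₂).const_mul
      (-(k₁/2))
    have := hd.deriv
    show deriv (fun s => Tt x s) t = _
    rw [hgt]; refine this.trans ?_
    push_cast
    ring
  -- spatial derivative of Tx
  have e2 : dX Tx x t = -(c₁*k₁) * (dX u x t * dX (dX u) x t + u x t * dX (dX (dX u)) x t)
      - c₁*k₁/2 * dX (dX (dX u)) x t + c₁*k₁ * (dX u x t * dX (dX u) x t)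
      - c₁*k₁ * ((u x t)^3 * dX u x t) - 3*c₁*k₁/2 * ((u x t)^2 * dX u x t)
      - c₁*k₁/2 * (u x t * dX u x t) := by
    have hgx : (fun y => Tx y t)
        = fun y => -(c₁*k₁) * (u y t * dX (dX u) y t) - c₁*k₁/2 * dX (dX u) y t
            + c₁*k₁/2 * (dX u y t)^2 - c₁*k₁/4 * (u y t)^4
            - c₁*k₁/2 * (u y t)^3 - c₁*k₁/4 * (u y t)^2 := by
      funext y; rw [hTx]; ring
    have b1 := (hA.mul hA2).const_mul (-(c₁*k₁))
    have b2 := hA2.const_mul (c₁*k₁/2)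
    have b3 := (hA1.pow 2).const_mul (c₁*k₁/2)
    have b4 := (hA.pow 4).const_mul (c₁*k₁/4)
    have b5 := (hA.pow 3).const_mul (c₁*k₁/2)
    have b6 := (hA.pow 2).const_mul (c₁*k₁/4)
    have hd := ((((b1.sub b2).add b3).sub b4).sub b5).sub b6
    have := hd.deriv
    show deriv (fun y => Tx y t) x = _
    rw [hgx]; refine this.trans ?_
    push_cast
    ring
  rw [e1, e2]
  linear_combination (-(c₁*k₁/2) * (2 * u x t + 1)) * hsol x t
end

section
/- Let k ≠ 0, k₁ ≠ 0, k₃ ≠ 0, k₄, c₀ ≠ 0 be real constants with k₁ ≠ −k₃, and let f₁(t) = 3k₁ e^{k t} + k k₄ be positive on an interval. Define B(t) = b₀ e^{k t} (b₀ ≠ 0), τ(t) = k₄ e^{−k t} + 3k₁/k, and C(t) = c₀ e^{k t} f₁(t)^{−2k₃/(3k₁) − 4/3}. Then τ(t)·B(t)·C'(t) − τ(t)·B'(t)·C(t) + (4k₁ + 2k₃)·B(t)·C(t) = 0 for all t in the interval. -/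
open Real

lemma hasDerivAt_exp_const_mul (k t : ℝ) :
    HasDerivAt (fun s => exp (k * s)) (k * exp (k * t)) t := by
  simpa [mul_comm] using ((hasDerivAt_id t).const_mul k).exp

lemma hasDerivAt_const_mul_exp_mul_rpow {g : ℝ → ℝ} {g' : ℝ} (c k p : ℝ) {t : ℝ}
    (hg : HasDerivAt g g' t) (hpos : 0 < g t) :
    HasDerivAt (fun s => c * exp (k * s) * g s ^ p)
      ((k + p * g' / g t) * (c * exp (k * t) * g t ^ p)) t := by
  have hgp := hg.rpow_const (p := p) (Or.inl hpos.ne')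
  refine (((hasDerivAt_exp_const_mul k t).const_mul c).mul hgp).congr_deriv ?_
  rw [rpow_sub hpos, rpow_one]
  field_simp

lemma const_add_mul_exp_neg_eq {k : ℝ} (hk : k ≠ 0) (a b t : ℝ) :
    b * exp (-k * t) + a / k = (a * exp (k * t) + k * b) / (k * exp (k * t)) := by
  rw [neg_mul, exp_neg]
  field_simp
  ring

theorem stmt12_general (k k₁ k₃ k₄ c₀ b₀ : ℝ)
    (hk : k ≠ 0) (hk₁ : k₁ ≠ 0)
    (f₁ B τ C : ℝ → ℝ)
    (hf₁ : ∀ t, f₁ t = 3 * k₁ * exp (k * t) + k * k₄)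
    (hB : ∀ t, B t = b₀ * exp (k * t))
    (hτ : ∀ t, τ t = k₄ * exp (-k * t) + 3 * k₁ / k)
    (hC : ∀ t, C t = c₀ * exp (k * t) * f₁ t ^ (-2 * k₃ / (3 * k₁) - 4/3)) :
    ∀ t, f₁ t > 0 →
      τ t * B t * deriv C t - τ t * deriv B t * C t
        + (4 * k₁ + 2 * k₃) * B t * C t = 0 := by
  intro t ht
  set p := -2 * k₃ / (3 * k₁) - 4/3 with hp_def
  have hf₁' : HasDerivAt f₁ (3 * k₁ * (k * exp (k * t))) t := by
    rw [funext hf₁]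
    exact ((hasDerivAt_exp_const_mul k t).const_mul _).add_const _
  have hB' : HasDerivAt B (k * B t) t := by
    rw [hB, funext hB]
    simpa [mul_left_comm] using (hasDerivAt_exp_const_mul k t).const_mul b₀
  have hC' : HasDerivAt C ((k + p * (3 * k₁ * (k * exp (k * t))) / f₁ t) * C t) t := by
    rw [funext hC]
    exact hasDerivAt_const_mul_exp_mul_rpow c₀ k p hf₁' ht
  -- τ = f₁ / (k eᵏᵗ), so τ (B C' - B' C) = 3 k₁ p B C, and 3 k₁ p = -(4 k₁ + 2 k₃).
  have hτf : τ t = f₁ t / (k * exp (k * t)) := by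
    rw [hτ, hf₁, const_add_mul_exp_neg_eq hk]
  have hp : 3 * k₁ * p = -(4 * k₁ + 2 * k₃) := by
    rw [hp_def]
    field_simp
    ring
  rw [hC'.deriv, hB'.deriv, hτf]
  have hcancel : f₁ t / (k * exp (k * t)) * (p * (3 * k₁ * (k * exp (k * t))) / f₁ t)
      = 3 * k₁ * p := by
    field_simp
  linear_combination B t * C t * (hcancel + hp)

theorem stmt12 (k k₁ k₃ k₄ c₀ b₀ : ℝ)
    (hk : k ≠ 0) (hk₁ : k₁ ≠ 0) (hk₃ : k₃ ≠ 0) (hc₀ : c₀ ≠ 0) (hb₀ : b₀ ≠ 0)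
    (hk₁₃ : k₁ ≠ -k₃)
    (f₁ B τ C : ℝ → ℝ)
    (hf₁ : ∀ t, f₁ t = 3 * k₁ * exp (k * t) + k * k₄)
    (hB : ∀ t, B t = b₀ * exp (k * t))
    (hτ : ∀ t, τ t = k₄ * exp (-k * t) + 3 * k₁ / k)
    (hC : ∀ t, C t = c₀ * exp (k * t) * f₁ t ^ (-2 * k₃ / (3 * k₁) - 4/3)) :
    ∀ t, f₁ t > 0 →
      τ t * B t * deriv C t - τ t * deriv B t * C t
        + (4 * k₁ + 2 * k₃) * B t * C t = 0 :=
  stmt12_general k k₁ k₃ k₄ c₀ b₀ hk hk₁ f₁ B τ C hf₁ hB hτ hC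
end

section
/- Let k₁ ≠ 0, k₂, k₃ ≠ 0, a₀, c₀ ≠ 0, β₀ be real constants with k₁ + k₃ ≠ 0 and k₁ + 2k₃ ≠ 0, and let τ(t) = 3k₁ t + k₃ > 0 on an interval. Define C(t) = c₀ τ^{−2k₃/(3k₁) − 4/3}, A(t) = (1/(k₁+k₃))·τ^{−2k₃/(3k₁) − 4/3}·(2c₀k₂ + a₀(k₁+k₃)τ^{k₃/(3k₁)+1/3}), and β(t) = β₀ − a₀k₂ τ^{−k₃/(3k₁)}/k₃ − 2c₀k₂² τ^{−2k₃/(3k₁)−1/3}/((k₁+k₃)(k₁+2k₃)). Then k₂·A(t) − β'(t) = 0 for all t in the interval. -/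
/-!
`β` is built as a termwise antiderivative of `k₂ A`: with `τ = 3 k₁ t + k₃`, the power
`τ ^ (-m / (3 k₁))` has derivative `-m τ ^ (-m / (3 k₁) - 1)`, and the factor `m` cancels the
denominators `k₃` and `k₁ + 2 k₃` of `β`.
-/

open Real

theorem hasDerivAt_mul_affine_rpow_neg_div_div {a b t : ℝ} (c : ℝ) {m : ℝ} (ha : a ≠ 0)
    (hm : m ≠ 0) (ht : a * t + b ≠ 0) :
    HasDerivAt (fun s => c * (a * s + b) ^ (-m / a) / m) (-c * (a * t + b) ^ (-m / a - 1)) t := by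
  have hlin : HasDerivAt (fun s => a * s + b) a t := by
    simpa using ((hasDerivAt_id t).const_mul a).add_const b
  refine (((hlin.rpow_const (p := -m / a) (Or.inl ht)).const_mul c).div_const m).congr_deriv ?_
  field_simp

theorem stmt13_general (k₁ k₂ k₃ a₀ c₀ β₀ : ℝ)
    (hk₁ : k₁ ≠ 0) (hk₃ : k₃ ≠ 0)
    (h13 : k₁ + k₃ ≠ 0) (h123 : k₁ + 2 * k₃ ≠ 0)
    (τ A β : ℝ → ℝ)
    (hτ : ∀ t, τ t = 3 * k₁ * t + k₃)
    (hA : ∀ t, A t = (1 / (k₁ + k₃)) * τ t ^ (-2 * k₃ / (3 * k₁) - 4/3) *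
      (2 * c₀ * k₂ + a₀ * (k₁ + k₃) * τ t ^ (k₃ / (3 * k₁) + 1/3)))
    (hβ : ∀ t, β t = β₀ - a₀ * k₂ * τ t ^ (-(k₃ / (3 * k₁))) / k₃
      - 2 * c₀ * k₂^2 * τ t ^ (-2 * k₃ / (3 * k₁) - 1/3) / ((k₁ + k₃) * (k₁ + 2 * k₃))) :
    ∀ t, τ t > 0 → k₂ * A t - deriv β t = 0 := by
  intro t ht
  have hk₁' : 3 * k₁ ≠ 0 := by positivity
  have hexp₁ : -(k₃ / (3 * k₁)) = -k₃ / (3 * k₁) := (neg_div _ _).symm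
  have hexp₂ : -2 * k₃ / (3 * k₁) - 1/3 = -(k₁ + 2 * k₃) / (3 * k₁) := by field_simp; ring
  have hβ_eq : β = fun u => β₀ - a₀ * k₂ * (3 * k₁ * u + k₃) ^ (-k₃ / (3 * k₁)) / k₃
      - 2 * c₀ * k₂^2 / (k₁ + k₃) * (3 * k₁ * u + k₃) ^ (-(k₁ + 2 * k₃) / (3 * k₁))
        / (k₁ + 2 * k₃) := by
    funext u; rw [hβ u, hτ u, hexp₁, hexp₂]; field_simp
  have hβ' : HasDerivAt β (a₀ * k₂ * τ t ^ (-k₃ / (3 * k₁) - 1)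
      + 2 * c₀ * k₂^2 / (k₁ + k₃) * τ t ^ (-(k₁ + 2 * k₃) / (3 * k₁) - 1)) t := by
    have hτt : 3 * k₁ * t + k₃ ≠ 0 := (hτ t ▸ ht).ne'
    rw [hβ_eq, hτ t]
    have hd₁ := hasDerivAt_mul_affine_rpow_neg_div_div (a₀ * k₂) hk₁' hk₃ hτt
    have hd₂ := hasDerivAt_mul_affine_rpow_neg_div_div (2 * c₀ * k₂^2 / (k₁ + k₃)) hk₁' h123 hτt
    exact ((hd₁.const_sub β₀).sub hd₂).congr_deriv (by ring)
  have hexp₃ : -k₃ / (3 * k₁) - 1 = (-2 * k₃ / (3 * k₁) - 4/3) + (k₃ / (3 * k₁) + 1/3) := by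
    ring
  have hexp₄ : -(k₁ + 2 * k₃) / (3 * k₁) - 1 = -2 * k₃ / (3 * k₁) - 4/3 := by
    field_simp; ring
  rw [hβ'.deriv, hA t, hexp₃, hexp₄, rpow_add ht (-2 * k₃ / (3 * k₁) - 4/3)]
  generalize τ t ^ (-2 * k₃ / (3 * k₁) - 4/3) = P
  generalize τ t ^ (k₃ / (3 * k₁) + 1/3) = Q
  field_simp
  ring

theorem stmt13 (k₁ k₂ k₃ a₀ c₀ β₀ : ℝ)
    (hk₁ : k₁ ≠ 0) (hk₃ : k₃ ≠ 0) (hc₀ : c₀ ≠ 0)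
    (h13 : k₁ + k₃ ≠ 0) (h123 : k₁ + 2 * k₃ ≠ 0)
    (τ C A β : ℝ → ℝ)
    (hτ : ∀ t, τ t = 3 * k₁ * t + k₃)
    (hC : ∀ t, C t = c₀ * τ t ^ (-2 * k₃ / (3 * k₁) - 4/3))
    (hA : ∀ t, A t = (1 / (k₁ + k₃)) * τ t ^ (-2 * k₃ / (3 * k₁) - 4/3) *
      (2 * c₀ * k₂ + a₀ * (k₁ + k₃) * τ t ^ (k₃ / (3 * k₁) + 1/3)))
    (hβ : ∀ t, β t = β₀ - a₀ * k₂ * τ t ^ (-(k₃ / (3 * k₁))) / k₃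
      - 2 * c₀ * k₂^2 * τ t ^ (-2 * k₃ / (3 * k₁) - 1/3) / ((k₁ + k₃) * (k₁ + 2 * k₃))) :
    ∀ t, τ t > 0 → k₂ * A t - deriv β t = 0 :=
  stmt13_general k₁ k₂ k₃ a₀ c₀ β₀ hk₁ hk₃ h13 h123 τ A β hτ hA hβ
end

section
/- Let k₁ ≠ 0, k₂, k₃, a₀, c₀ ≠ 0 be real constants with k₁ + k₃ ≠ 0, let τ(t) = 3k₁ t + k₃ > 0 on an interval, with B(t) = b₀ (constant), C(t) = c₀ τ^{−2k₃/(3k₁)−4/3}, and A(t) = (1/(k₁+k₃))τ^{−2k₃/(3k₁)−4/3}(2c₀k₂ + a₀(k₁+k₃)τ^{k₃/(3k₁)+1/3}). Then τ(t)·A'(t)·B(t) − τ(t)·A(t)·B'(t) + 2k₂·B(t)·C(t) + (3k₁+k₃)·A(t)·B(t) = 0 for all t in the interval. -/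
open Real

/-! Since `τ' = 3k₁`, the operator `τ d/dt` multiplies `τ ^ p` by `3k₁p`. The exponents are chosen so
that `τ d/dt + (3k₁ + k₃)` annihilates the `a₀`-part `a₀ τ ^ (-k₃/(3k₁) - 1)` of `A`, and turns the
`c₀`-part `2c₀k₂/(k₁+k₃) · τ ^ (-2k₃/(3k₁) - 4/3)` into `-2k₂ C`. -/

theorem hasDerivAt_affine_rpow (a b p : ℝ) {t : ℝ} (ht : a * t + b ≠ 0) :
    HasDerivAt (fun s => (a * s + b) ^ p) (a * p * (a * t + b) ^ p / (a * t + b)) t := by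
  have hlin : HasDerivAt (fun s => a * s + b) a t := by
    simpa using ((hasDerivAt_id t).const_mul a).add_const b
  convert hlin.rpow_const (p := p) (Or.inl ht) using 1
  rw [rpow_sub_one ht]
  ring

theorem stmt14_general (k₁ k₂ k₃ a₀ c₀ b₀ : ℝ)
    (hk₁ : k₁ ≠ 0) (h13 : k₁ + k₃ ≠ 0)
    (τ B C A : ℝ → ℝ)
    (hτ : ∀ t, τ t = 3 * k₁ * t + k₃)
    (hB : ∀ t, B t = b₀)
    (hC : ∀ t, C t = c₀ * τ t ^ (-2 * k₃ / (3 * k₁) - 4/3))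
    (hA : ∀ t, A t = (1 / (k₁ + k₃)) * τ t ^ (-2 * k₃ / (3 * k₁) - 4/3) *
      (2 * c₀ * k₂ + a₀ * (k₁ + k₃) * τ t ^ (k₃ / (3 * k₁) + 1/3))) :
    ∀ t, τ t > 0 →
      τ t * deriv A t * B t - τ t * A t * deriv B t
        + 2 * k₂ * B t * C t + (3 * k₁ + k₃) * A t * B t = 0 := by
  intro t ht
  have hτt : 3 * k₁ * t + k₃ ≠ 0 := hτ t ▸ ht.ne'
  have hα : 3 * k₁ * (-2 * k₃ / (3 * k₁) - 4/3) = -(4 * k₁ + 2 * k₃) := by field_simp; ring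
  have hβ : 3 * k₁ * (k₃ / (3 * k₁) + 1/3) = k₁ + k₃ := by field_simp; ring
  generalize -2 * k₃ / (3 * k₁) - 4/3 = α at hα hA hC
  generalize k₃ / (3 * k₁) + 1/3 = β at hβ hA
  have hAeq : A = fun s => 1 / (k₁ + k₃) * (3 * k₁ * s + k₃) ^ α *
      (2 * c₀ * k₂ + a₀ * (k₁ + k₃) * (3 * k₁ * s + k₃) ^ β) := by
    funext s; rw [hA, hτ]
  have hAderiv := ((hasDerivAt_affine_rpow _ _ α hτt).const_mul (1 / (k₁ + k₃))).fun_mul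
    (((hasDerivAt_affine_rpow _ _ β hτt).const_mul (a₀ * (k₁ + k₃))).const_add (2 * c₀ * k₂))
  rw [← hAeq] at hAderiv
  rw [hAderiv.deriv, funext hB, deriv_const, hC, hA, hτ]
  generalize (3 * k₁ * t + k₃) ^ α = X
  generalize (3 * k₁ * t + k₃) ^ β = Y
  field_simp
  linear_combination X * b₀ *
    ((2 * c₀ * k₂ + (k₁ + k₃) * a₀ * Y) * hα + (k₁ + k₃) * a₀ * Y * hβ)

theorem stmt14 (k₁ k₂ k₃ a₀ c₀ b₀ : ℝ)
    (hk₁ : k₁ ≠ 0) (hc₀ : c₀ ≠ 0) (h13 : k₁ + k₃ ≠ 0)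
    (τ B C A : ℝ → ℝ)
    (hτ : ∀ t, τ t = 3 * k₁ * t + k₃)
    (hB : ∀ t, B t = b₀)
    (hC : ∀ t, C t = c₀ * τ t ^ (-2 * k₃ / (3 * k₁) - 4/3))
    (hA : ∀ t, A t = (1 / (k₁ + k₃)) * τ t ^ (-2 * k₃ / (3 * k₁) - 4/3) *
      (2 * c₀ * k₂ + a₀ * (k₁ + k₃) * τ t ^ (k₃ / (3 * k₁) + 1/3))) :
    ∀ t, τ t > 0 →
      τ t * deriv A t * B t - τ t * A t * deriv B t
        + 2 * k₂ * B t * C t + (3 * k₁ + k₃) * A t * B t = 0 :=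
  stmt14_general k₁ k₂ k₃ a₀ c₀ b₀ hk₁ h13 τ B C A hτ hB hC hA
end
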